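/- Correctness of the QBF reduction: a quantified Boolean formula α = Q_1x_1 Q_2x_2 ... Q_nx_n φ(x_1,...,x_n) — where Q_i is ∃ for odd i and ∀ for even i, and φ is a propositional formula in CNF over x_1,...,x_n — is true if and only if M_n, x_0 ⊨ θ_α, where θ_α = QT_1 ··· QT_n ψ, QT_i is ⟨(a_i + ā_i); ?(p_i ∨ q_i)⟩ if i is odd and [(a_i + ā_i); ?(p_i ∨ q_i)] if i is even, and ψ is obtained from φ by replacing each positive literal x_i by K̂p_i and each negative literal ¬x_i by K̂q_i (K̂χ abbreviates ¬K¬χ). -/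

import Mathlib

mutual
/-- Formulas of EPDL. -/
inductive EForm (P A : Type) : Type
  | top : EForm P A
  | atom : P → EForm P A
  | neg : EForm P A → EForm P A
  | and : EForm P A → EForm P A → EForm P A
  | box : EProg P A → EForm P A → EForm P A
  | know : EForm P A → EForm P A
/-- Programs of EPDL. -/
inductive EProg (P A : Type) : Type
  | act : A → EProg P A
  | test : EForm P A → EProg P A
  | seq : EProg P A → EProg P A → EProg P A
  | choice : EProg P A → EProg P A → EProg P A
  | star : EProg P A → EProg P A
end

namespace EForm
variable {P A : Type}
/-- φ ∨ ψ := ¬(¬φ ∧ ¬ψ) -/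
def or (φ ψ : EForm P A) : EForm P A := neg (and (neg φ) (neg ψ))
/-- φ → ψ := ¬φ ∨ ψ -/
def imp (φ ψ : EForm P A) : EForm P A := or (neg φ) ψ
def iff (φ ψ : EForm P A) : EForm P A := and (imp φ ψ) (imp ψ φ)
/-- ⟨π⟩φ := ¬[π]¬φ -/
def dia (π : EProg P A) (φ : EForm P A) : EForm P A := neg (box π (neg φ))
/-- ⦗π⦘φ := [π]φ ∧ ⟨π⟩φ -/
def bbox (π : EProg P A) (φ : EForm P A) : EForm P A := and (box π φ) (dia π φ)
/-- K̂φ := ¬K¬φ -/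
def hatK (φ : EForm P A) : EForm P A := neg (know (neg φ))
end EForm

/-- A Kripke model with labelled relations. -/
structure Kripke (P A : Type) where
  S : Type
  R : A → S → S → Prop
  V : S → P → Prop

namespace Kripke
variable {P A : Type}
/-- U|^a -/
def img (N : Kripke P A) (a : A) (U : Set N.S) : Set N.S := {t | ∃ u ∈ U, N.R a u t}
/-- Iterated update U|^σ along a sequence of actions. -/
def updU (N : Kripke P A) : Set N.S → List A → Set N.S
  | U, [] => U
  | U, a :: σ => N.updU (N.img a U) σ
end Kripke

mutual
/-- Truth of an EPDL formula at a pointed uncertainty map, represented by the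
(fixed) Kripke model `N`, an uncertainty set `U` and a state `s`. -/
def eSat {P A : Type} (N : Kripke P A) : Set N.S → N.S → EForm P A → Prop
  | _, _, .top => True
  | _, s, .atom p => N.V s p
  | U, s, .neg φ => ¬ eSat N U s φ
  | U, s, .and φ ψ => eSat N U s φ ∧ eSat N U s ψ
  | U, s, .box π φ => ∀ c : Set N.S × N.S, eRel N π (U, s) c → eSat N c.1 c.2 φ
  | U, _, .know φ => ∀ u ∈ U, eSat N U u φ
/-- The relation ⟦π⟧ between pointed uncertainty maps (over a fixed Kripke model
`N`, a pointed uncertainty map is a pair of an uncertainty set and a state). -/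
def eRel {P A : Type} (N : Kripke P A) : EProg P A → Set N.S × N.S → Set N.S × N.S → Prop
  | .act a, c, c' => c'.1 = N.img a c.1 ∧ N.R a c.2 c'.2
  | .test ψ, c, c' => c' = c ∧ eSat N c.1 c.2 ψ
  | .seq π₁ π₂, c, c' => ∃ d, eRel N π₁ c d ∧ eRel N π₂ d c'
  | .choice π₁ π₂, c, c' => eRel N π₁ c c' ∨ eRel N π₂ c c'
  | .star π, c, c' => Relation.ReflTransGen (fun x y => eRel N π x y) c c'
end

/-- Validity: truth at every pointed uncertainty map. -/
def eValid {P A : Type} (φ : EForm P A) : Prop :=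
  ∀ (N : Kripke P A) (U : Set N.S), U.Nonempty → ∀ s ∈ U, eSat N U s φ

/-- Proposition letters for the QBF reduction: `(true, k)` is p_{k+1} and
`(false, k)` is q_{k+1}. -/
abbrev QP : Type := Bool × ℕ

/-- Action symbols for the QBF reduction: `(true, k)` is a_{k+1} and
`(false, k)` is ā_{k+1}. -/
abbrev QA : Type := Bool × ℕ

/-- States of M_n: `none` is x_0, `some (true, k)` is x_{k+1} and
`some (false, k)` is x̄_{k+1}, where k+1 ≤ n. -/
def QS (n : ℕ) : Type := {v : Option (Bool × ℕ) // ∀ b k, v = some (b, k) → k < n}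

/-- The level of a state: x_0 has level 0, x_i and x̄_i have level i. -/
def levelOf {n : ℕ} (s : QS n) : ℕ :=
  match s.val with
  | none => 0
  | some (_, k) => k + 1

/-- The uncertainty map M_n (its underlying Kripke model): the action a_{k+1}
(resp. ā_{k+1}), i.e. `(true,k)` (resp. `(false,k)`), is the identity on all
states together with the edges from the two states of level k to x_{k+1}
(resp. x̄_{k+1}); p_{k+1} holds exactly at x_{k+1} and q_{k+1} exactly at x̄_{k+1}. -/
def MnK (n : ℕ) : Kripke QP QA where
  S := QS n
  R := fun a s t => s = t ∨ (levelOf s = a.2 ∧ t.val = some (a.1, a.2))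
  V := fun s p => s.val = some p

/-- The initial uncertainty set U = {x_0}. -/
def Un (n : ℕ) : Set (QS n) := {s | s.val = none}

/-- The initial state x_0. -/
def x0 (n : ℕ) : QS n := ⟨none, fun _ _ h => nomatch h⟩

/-- Big conjunction of a list of formulas. -/
def bigAnd : List (EForm QP QA) → EForm QP QA
  | [] => EForm.top
  | φ :: rest => EForm.and φ (bigAnd rest)

/-- Big disjunction of a list of formulas (⊥ for the empty list). -/
def bigOr : List (EForm QP QA) → EForm QP QA
  | [] => EForm.neg EForm.top
  | φ :: rest => EForm.or φ (bigOr rest)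

/-- Translation of a literal: a positive literal x_{k+1}, encoded `(true, k)`,
becomes K̂p_{k+1}; a negative literal ¬x_{k+1}, encoded `(false, k)`, becomes
K̂q_{k+1}. -/
def litForm (l : Bool × ℕ) : EForm QP QA := EForm.hatK (EForm.atom l)

/-- ψ: the translation of a CNF (a list of clauses, each a list of literals). -/
def psiOf (cnf : List (List (Bool × ℕ))) : EForm QP QA :=
  bigAnd (cnf.map fun cl => bigOr (cl.map litForm))

/-- The program (a_{i+1} + ā_{i+1}); ?(p_{i+1} ∨ q_{i+1}) of QT_{i+1}. -/
def qtProg (i : ℕ) : EProg QP QA :=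
  EProg.seq (EProg.choice (EProg.act (true, i)) (EProg.act (false, i)))
    (EProg.test (EForm.or (EForm.atom (true, i)) (EForm.atom (false, i))))

/-- QT_{i+1} ··· QT_{i+m} ψ: the quantifier-prefix translation, where QT_{j} is a
diamond over the corresponding program if j is odd and a box if j is even. -/
def thetaAux : ℕ → ℕ → EForm QP QA → EForm QP QA
  | _, 0, ψ => ψ
  | i, m + 1, ψ =>
      if i % 2 = 0 then EForm.dia (qtProg i) (thetaAux (i + 1) m ψ)
      else EForm.box (qtProg i) (thetaAux (i + 1) m ψ)

/-- θ_α = QT_1 ··· QT_n ψ. -/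
def theta (n : ℕ) (ψ : EForm QP QA) : EForm QP QA := thetaAux 0 n ψ

/-- Truth of a CNF under a valuation (variable x_{k+1} is index k; a literal
`(b, k)` is satisfied iff the value of x_{k+1} is b). -/
def evalCNF (v : ℕ → Bool) (cnf : List (List (Bool × ℕ))) : Prop :=
  ∀ cl ∈ cnf, ∃ l ∈ cl, v l.2 = l.1

/-- Truth of the quantified Boolean formula Q_{i+1}x_{i+1} ... Q_{i+m}x_{i+m} F,
where Q_j is ∃ for odd j and ∀ for even j. -/
def qbfAux (F : (ℕ → Bool) → Prop) : ℕ → ℕ → (ℕ → Bool) → Prop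
  | _, 0, v => F v
  | i, m + 1, v =>
      if i % 2 = 0 then ∃ b : Bool, qbfAux F (i + 1) m (Function.update v i b)
      else ∀ b : Bool, qbfAux F (i + 1) m (Function.update v i b)

/-- Truth of the QBF α = Q_1x_1 Q_2x_2 ... Q_nx_n φ(x_1,...,x_n) for a CNF φ. -/
def qbfTrue (n : ℕ) (cnf : List (List (Bool × ℕ))) : Prop :=
  qbfAux (fun v => evalCNF v cnf) 0 n (fun _ => false)

/-! Choosing a_{i+1} or ā_{i+1} moves the state to x_{i+1} or x̄_{i+1} and adds that state to the
uncertainty set, which therefore records the whole partial valuation chosen so far. So the box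
and the diamond of QT_{i+1} quantify universally and existentially over the value of x_{i+1},
and at the end K̂p_k (resp. K̂q_k) holds iff x_k was set to true (resp. false). -/

section Semantics

variable {P A : Type} {N : Kripke P A} {U : Set N.S} {s : N.S}

theorem eSat_or {φ ψ : EForm P A} :
    eSat N U s (EForm.or φ ψ) ↔ eSat N U s φ ∨ eSat N U s ψ := by
  simp only [EForm.or, eSat]
  tauto

theorem eSat_box_iff_forall_of_eRel {ι : Type} {π : EProg P A} {φ : EForm P A}
    (f : ι → Set N.S × N.S) (hπ : ∀ c, eRel N π (U, s) c ↔ ∃ b, c = f b) :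
    eSat N U s (EForm.box π φ) ↔ ∀ b, eSat N (f b).1 (f b).2 φ := by
  simp only [eSat, hπ]
  exact ⟨fun h b => h _ ⟨b, rfl⟩, by rintro h _ ⟨b, rfl⟩; exact h b⟩

theorem eSat_dia_iff_exists_of_eRel {ι : Type} {π : EProg P A} {φ : EForm P A}
    (f : ι → Set N.S × N.S) (hπ : ∀ c, eRel N π (U, s) c ↔ ∃ b, c = f b) :
    eSat N U s (EForm.dia π φ) ↔ ∃ b, eSat N (f b).1 (f b).2 φ := by
  rw [EForm.dia, eSat, eSat_box_iff_forall_of_eRel f hπ]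
  simp only [eSat, not_forall, not_not]

theorem eSat_hatK_atom {p : P} : eSat N U s (EForm.hatK (EForm.atom p)) ↔ ∃ u ∈ U, N.V u p := by
  simp [EForm.hatK, eSat]

end Semantics

section Translation

variable {N : Kripke QP QA} {U : Set N.S} {s : N.S}

theorem eSat_bigAnd {L : List (EForm QP QA)} :
    eSat N U s (bigAnd L) ↔ ∀ φ ∈ L, eSat N U s φ := by
  induction L with
  | nil => simp [bigAnd, eSat]
  | cons φ rest ih => simp [bigAnd, eSat, ih]

theorem eSat_bigOr {L : List (EForm QP QA)} :
    eSat N U s (bigOr L) ↔ ∃ φ ∈ L, eSat N U s φ := by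
  induction L with
  | nil => simp [bigOr, eSat]
  | cons φ rest ih => simp [bigOr, eSat_or, ih]

theorem eSat_psiOf_iff {cnf : List (List (Bool × ℕ))} {v : ℕ → Bool}
    (hlit : ∀ cl ∈ cnf, ∀ l ∈ cl, eSat N U s (litForm l) ↔ v l.2 = l.1) :
    eSat N U s (psiOf cnf) ↔ evalCNF v cnf := by
  rw [psiOf, evalCNF, eSat_bigAnd, List.forall_mem_map]
  refine forall₂_congr fun cl hcl => ?_
  simp only [eSat_bigOr, List.mem_map, exists_exists_and_eq_and]
  exact exists_congr fun l => and_congr_right fun hl => hlit cl hcl l hl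

end Translation

section UncertaintyMap

variable {n : ℕ}

/-- The state x_{i+1} of `M_n` if `b`, and x̄_{i+1} otherwise. -/
def xState (n : ℕ) (b : Bool) (i : ℕ) (hi : i < n) : QS n :=
  ⟨some (b, i), fun _ _ h => by cases h; exact hi⟩

theorem levelOf_xState (b : Bool) {i : ℕ} (hi : i < n) : levelOf (xState n b i hi) = i + 1 := rfl

theorem levelOf_x0 : levelOf (x0 n) = 0 := rfl

/-- The uncertainty set reached from {x_0} after choosing the values `v 0, …, v (i-1)`. -/
def Uafter (n i : ℕ) (v : ℕ → Bool) : Set (QS n) :=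
  {s | s.val = none ∨ ∃ k < i, s.val = some (v k, k)}

theorem Un_eq_Uafter_zero (v : ℕ → Bool) : Un n = Uafter n 0 v := by
  ext t
  simp [Un, Uafter]

theorem xState_mem_Uafter_update (v : ℕ → Bool) (b : Bool) {i : ℕ} (hi : i < n) :
    xState n b i hi ∈ Uafter n (i + 1) (Function.update v i b) :=
  Or.inr ⟨i, i.lt_succ_self, by simp [xState]⟩

theorem img_Uafter {i : ℕ} (v : ℕ → Bool) (b : Bool) {s : QS n} (hs : s ∈ Uafter n i v)
    (hsi : levelOf s = i) :
    (MnK n).img (b, i) (Uafter n i v) = Uafter n (i + 1) (Function.update v i b) := by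
  ext t
  constructor
  · rintro ⟨u, hu, rfl | ⟨-, ht⟩⟩
    · rcases hu with h | ⟨k, hk, h⟩
      · exact Or.inl h
      · exact Or.inr ⟨k, by omega, by rwa [Function.update_of_ne (by omega)]⟩
    · exact Or.inr ⟨i, i.lt_succ_self, by rwa [Function.update_self]⟩
  · rintro (h | ⟨k, hk, h⟩)
    · exact ⟨t, Or.inl h, Or.inl rfl⟩
    · rcases Nat.lt_succ_iff_lt_or_eq.mp hk with hk | rfl
      · rw [Function.update_of_ne (by omega)] at h
        exact ⟨t, Or.inr ⟨k, hk, h⟩, Or.inl rfl⟩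
      · rw [Function.update_self] at h
        exact ⟨s, hs, Or.inr ⟨hsi, h⟩⟩

theorem eRel_qtProg_iff {i : ℕ} (hi : i < n) (v : ℕ → Bool) {s : QS n} (hs : s ∈ Uafter n i v)
    (hsi : levelOf s = i) (c : Set (QS n) × QS n) :
    eRel (MnK n) (qtProg i) (Uafter n i v, s) c ↔
      ∃ b : Bool, c = (Uafter n (i + 1) (Function.update v i b), xState n b i hi) := by
  constructor
  · rintro ⟨c, hchoice, rfl, htest⟩
    obtain ⟨b, hb⟩ : ∃ b : Bool, c.2.val = some (b, i) := by
      rcases eSat_or.mp htest with h | h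
      exacts [⟨true, h⟩, ⟨false, h⟩]
    have hne : s ≠ c.2 := by
      rintro rfl
      simp [levelOf, hb] at hsi
    have hact (b' : Bool) (h : eRel (MnK n) (.act (b', i)) (Uafter n i v, s) c) :
        c = (Uafter n (i + 1) (Function.update v i b'), xState n b' i hi) := by
      obtain ⟨hU, rfl | ⟨-, h⟩⟩ := h
      · exact absurd rfl hne
      · exact Prod.ext (hU.trans (img_Uafter v b' hs hsi)) (Subtype.ext h)
    rcases hchoice with h | h
    exacts [⟨true, hact true h⟩, ⟨false, hact false h⟩]
  · rintro ⟨b, rfl⟩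
    refine ⟨(Uafter n (i + 1) (Function.update v i b), xState n b i hi), ?_, rfl, ?_⟩
    · have hR : (MnK n).R (b, i) s (xState n b i hi) := Or.inr ⟨hsi, rfl⟩
      cases b
      · exact Or.inr ⟨(img_Uafter v false hs hsi).symm, hR⟩
      · exact Or.inl ⟨(img_Uafter v true hs hsi).symm, hR⟩
    · cases b
      · exact eSat_or.mpr (Or.inr rfl)
      · exact eSat_or.mpr (Or.inl rfl)

theorem eSat_litForm_Uafter {l : Bool × ℕ} (hl : l.2 < n) (v : ℕ → Bool) (s : QS n) :
    eSat (MnK n) (Uafter n n v) s (litForm l) ↔ v l.2 = l.1 := by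
  refine (eSat_hatK_atom (N := MnK n) (U := Uafter n n v) (s := s)).trans ?_
  constructor
  · rintro ⟨u, h | ⟨k, -, h⟩, hu⟩
    · exact absurd (h.symm.trans hu) (Option.some_ne_none l).symm
    · obtain rfl : l = (v k, k) := Option.some_injective _ (hu.symm.trans h)
      rfl
  · intro hv
    exact ⟨xState n l.1 l.2 hl, Or.inr ⟨l.2, hl, by simp [xState, hv]⟩, rfl⟩

end UncertaintyMap

theorem eSat_thetaAux_iff {n : ℕ} {cnf : List (List (Bool × ℕ))}
    (hvar : ∀ cl ∈ cnf, ∀ l ∈ cl, l.2 < n) (m : ℕ) :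
    ∀ (i : ℕ) (v : ℕ → Bool) (s : QS n), i + m = n → s ∈ Uafter n i v → levelOf s = i →
      (eSat (MnK n) (Uafter n i v) s (thetaAux i m (psiOf cnf)) ↔
        qbfAux (fun w => evalCNF w cnf) i m v) := by
  induction m with
  | zero =>
    rintro i v s rfl - -
    exact eSat_psiOf_iff fun cl hcl l hl => eSat_litForm_Uafter (hvar cl hcl l hl) v s
  | succ m ih =>
    intro i v s hin hs hsi
    have hi : i < n := by omega
    let next (b : Bool) := (Uafter n (i + 1) (Function.update v i b), xState n b i hi)
    have hnext (b : Bool) := ih (i + 1) (Function.update v i b) (xState n b i hi) (by omega)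
      (xState_mem_Uafter_update v b hi) (levelOf_xState b hi)
    have hprog := eRel_qtProg_iff hi v hs hsi
    by_cases hpar : i % 2 = 0
    · simp only [thetaAux, qbfAux, hpar, if_true]
      exact (eSat_dia_iff_exists_of_eRel (N := MnK n) next hprog).trans (exists_congr hnext)
    · simp only [thetaAux, qbfAux, hpar, if_false]
      exact (eSat_box_iff_forall_of_eRel (N := MnK n) next hprog).trans (forall_congr' hnext)

/-- Correctness of the QBF reduction: the quantified Boolean formula
α = Q_1x_1 ... Q_nx_n φ(x_1,...,x_n) (Q_i being ∃ for odd i and ∀ for even i, φ a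
CNF over x_1,...,x_n) is true iff M_n, x_0 ⊨ θ_α, where θ_α = QT_1 ··· QT_n ψ,
QT_i = ⟨(a_i + ā_i); ?(p_i ∨ q_i)⟩ for odd i and [(a_i + ā_i); ?(p_i ∨ q_i)] for
even i, and ψ replaces each literal x_i by K̂p_i and ¬x_i by K̂q_i. -/
theorem qbf_reduction_correct (n : ℕ) (cnf : List (List (Bool × ℕ)))
    (hvar : ∀ cl ∈ cnf, ∀ l ∈ cl, l.2 < n) :
    qbfTrue n cnf ↔ eSat (MnK n) (Un n) (x0 n) (theta n (psiOf cnf)) := by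
  rw [qbfTrue, theta, Un_eq_Uafter_zero (fun _ => false)]
  exact (eSat_thetaAux_iff hvar n 0 _ (x0 n) (zero_add n) (Or.inl rfl) levelOf_x0).symm
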